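/- Let n ≥ 4, let I ⊆ [n] with |I| ≥ 5, and let j_1, j_2 ∈ I with j_1 ≠ j_2. Let M be a matching of BP_n and F^e a set of edges of BP_n having no endpoint in V(M), with |M| + |F^e| ≤ n − 2; write BP_n^J − F for the graph obtained from the subgraph of BP_n induced by the vertices whose last entry lies in J after deleting the vertices of V(M) and the edges of F^e. Suppose that for every i ∈ I the graph BP_n^{{i}} − F is Hamiltonian connected. Then for every vertex u of BP_n^{j_1} with u ∉ V(M) and every vertex v of BP_n^{j_2} with v ∉ V(M), the graph BP_n^I − F contains a Hamiltonian path between u and v. -/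

import Mathlib

/-- A signed permutation of `⟨n⟩ = {1, …, n}`: a function `u : Fin n → ℤ` with all entries in
`[n] = {±1, …, ±n}` whose absolute values form a permutation of `{1, …, n}`. -/
def SignedPerm (n : ℕ) : Type :=
  {u : Fin n → ℤ // (∀ i, u i ≠ 0 ∧ (u i).natAbs ≤ n) ∧
    Function.Injective fun i => (u i).natAbs}

instance (n : ℕ) : DecidableEq (SignedPerm n) := Subtype.instDecidableEq

/-- The index map reversing the first `k+1` positions. -/
def revIdx {n : ℕ} (k : Fin n) (i : Fin n) : Fin n :=
  if i.val ≤ k.val then ⟨k.val - i.val, lt_of_le_of_lt (Nat.sub_le _ _) k.isLt⟩ else i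

lemma revIdx_involutive {n : ℕ} (k : Fin n) : Function.Involutive (revIdx k) := by
  intro i
  unfold revIdx
  by_cases h : i.val ≤ k.val
  · rw [if_pos h]
    rw [if_pos (by simp)]
    exact Fin.ext (by simp; omega)
  · rw [if_neg h, if_neg h]

/-- The `(k+1)`-st prefix reversal of `u : Fin n → ℤ`: negate and reverse the first
`k+1` entries. (Here `k : Fin n`, so this covers the 1st through `n`-th prefix reversals.) -/
def prefixRev {n : ℕ} (k : Fin n) (u : Fin n → ℤ) : Fin n → ℤ :=
  fun i => if i.val ≤ k.val then -u (revIdx k i) else u i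

/-- The prefix reversal of a signed permutation is a signed permutation. -/
def prefixRevPerm {n : ℕ} (k : Fin n) (u : SignedPerm n) : SignedPerm n :=
  ⟨prefixRev k u.1, by
    have h1 := u.2.1
    have h2 := u.2.2
    have key : ∀ i, ((prefixRev k u.1) i).natAbs = (u.1 (revIdx k i)).natAbs := by
      intro i
      by_cases h : i.val ≤ k.val
      · simp [prefixRev, h]
      · simp [prefixRev, revIdx, h]
    refine ⟨fun i => ⟨?_, ?_⟩, ?_⟩
    · show prefixRev k u.1 i ≠ 0
      by_cases h : i.val ≤ k.val <;> simp [prefixRev, h]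
      · exact (h1 _).1
      · exact (h1 _).1
    · show ((prefixRev k u.1) i).natAbs ≤ n
      rw [key i]
      exact (h1 _).2
    · show Function.Injective fun i => ((prefixRev k u.1) i).natAbs
      have : (fun i => ((prefixRev k u.1) i).natAbs) =
        (fun i => (u.1 i).natAbs) ∘ revIdx k := funext key
      rw [this]
      exact h2.comp (revIdx_involutive k).injective⟩

/-- The `n`-dimensional burnt pancake graph: vertices are the signed permutations of
`{1, …, n}`, and `u, v` are adjacent iff one is a prefix reversal of the other. -/
def burntPancakeGraph (n : ℕ) : SimpleGraph (SignedPerm n) where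
  Adj u v := u ≠ v ∧ ∃ k : Fin n, v = prefixRevPerm k u ∨ u = prefixRevPerm k v
  symm := by
    refine ⟨?_⟩
    rintro u v ⟨hne, k, h⟩
    exact ⟨hne.symm, k, h.symm⟩
  loopless := by refine ⟨?_⟩; rintro u ⟨hne, -⟩; exact hne rfl

/-- The last entry of a signed permutation. -/
def lastEntry {n : ℕ} (u : SignedPerm n) : ℤ :=
  if h : 0 < n then u.1 ⟨n - 1, by omega⟩ else 0

/-- `M` is a set of edges of `G` forming a matching: no two distinct edges of `M`
share an endpoint. -/
def IsMatchingEdgeSet {V : Type*} (G : SimpleGraph V) (M : Finset (Sym2 V)) : Prop :=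
  (∀ e ∈ M, e ∈ G.edgeSet) ∧
    ∀ e ∈ M, ∀ f ∈ M, e ≠ f → ∀ v : V, v ∈ e → v ∉ f

/-- `V(M)`: the set of endpoints of the edges of `M`. -/
def matchingVerts {V : Type*} (M : Finset (Sym2 V)) : Set V :=
  {v | ∃ e ∈ M, v ∈ e}

/-- The graph obtained from `G` by deleting the endpoints of the edges of `M` and
the edges of `Fe`. -/
def faultyGraph {V : Type*} (G : SimpleGraph V) (M Fe : Finset (Sym2 V)) :
    SimpleGraph {v : V // v ∉ matchingVerts M} :=
  SimpleGraph.induce {v : V | v ∉ matchingVerts M} (G.deleteEdges (Fe : Set (Sym2 V)))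

/-- A graph has a Hamiltonian cycle. -/
def HasHamiltonianCycle {V : Type*} [DecidableEq V] (G : SimpleGraph V) : Prop :=
  ∃ (v : V) (p : G.Walk v v), p.IsHamiltonianCycle

/-- A graph is Hamiltonian connected: between any two distinct vertices there is a
Hamiltonian path. -/
def HamiltonianConnected {V : Type*} [DecidableEq V] (G : SimpleGraph V) : Prop :=
  ∀ u v : V, u ≠ v → ∃ p : G.Walk u v, p.IsHamiltonian

/-- `G` is `k`-hybrid fault Hamiltonian. -/
def HybridFaultHamiltonian {V : Type*} [DecidableEq V] (G : SimpleGraph V) (k : ℕ) : Prop :=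
  ∀ M Fe : Finset (Sym2 V),
    IsMatchingEdgeSet G M →
    (∀ e ∈ Fe, e ∈ G.edgeSet) →
    (∀ e ∈ Fe, ∀ v : V, v ∈ e → v ∉ matchingVerts M) →
    M.card + Fe.card ≤ k →
    HasHamiltonianCycle (faultyGraph G M Fe)

/-- `G` is `k`-hybrid fault Hamiltonian connected. -/
def HybridFaultHamiltonianConnected {V : Type*} [DecidableEq V] (G : SimpleGraph V) (k : ℕ) :
    Prop :=
  ∀ M Fe : Finset (Sym2 V),
    IsMatchingEdgeSet G M →
    (∀ e ∈ Fe, e ∈ G.edgeSet) →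
    (∀ e ∈ Fe, ∀ v : V, v ∈ e → v ∉ matchingVerts M) →
    M.card + Fe.card ≤ k →
    HamiltonianConnected (faultyGraph G M Fe)


section Dev
variable {n : ℕ}

/-- full reversal -/
def fullRev (hn : 0 < n) (u : SignedPerm n) : SignedPerm n :=
  prefixRevPerm ⟨n - 1, by omega⟩ u

lemma fullRev_apply (hn : 0 < n) (u : SignedPerm n) (j : Fin n) :
    (fullRev hn u).1 j = -u.1 ⟨n - 1 - j.val, by omega⟩ := by
  have hj : j.val ≤ n - 1 := by omega
  simp only [fullRev, prefixRevPerm, prefixRev, revIdx, if_pos hj]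

lemma lastEntry_eq (hn : 0 < n) (u : SignedPerm n) :
    lastEntry u = u.1 ⟨n - 1, by omega⟩ := by
  simp [lastEntry, hn]

lemma lastEntry_fullRev (hn : 0 < n) (u : SignedPerm n) :
    lastEntry (fullRev hn u) = -u.1 ⟨0, hn⟩ := by
  rw [lastEntry_eq hn, fullRev_apply]
  refine congrArg (fun x => -u.1 x) (Fin.ext ?_)
  show n - 1 - (n-1) = 0
  omega

lemma fullRev_involutive (hn : 0 < n) : Function.Involutive (fullRev hn) := by
  intro u
  apply Subtype.ext
  funext j
  rw [fullRev_apply, fullRev_apply]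
  simp only [neg_neg]
  refine congrArg u.1 (Fin.ext ?_)
  show n - 1 - (n - 1 - j.val) = j.val
  have := j.isLt
  omega

lemma adj_fullRev (hn : 0 < n) (u : SignedPerm n) (hne : u ≠ fullRev hn u) :
    (burntPancakeGraph n).Adj u (fullRev hn u) :=
  ⟨hne, ⟨n-1, by omega⟩, Or.inl rfl⟩

end Dev

section Fam
variable {n : ℕ}

/-- value permutation: `vperm a b n 1 = b`, `vperm a b n n = a`. -/
def vperm (a b nn : ℕ) : Equiv.Perm ℕ :=
  (Equiv.swap nn a) * (Equiv.swap 1 ((Equiv.swap nn a) b))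

lemma vperm_one (a b nn : ℕ) : vperm a b nn 1 = b := by
  simp [vperm, Equiv.Perm.mul_apply, Equiv.swap_apply_left]

lemma vperm_last (a b nn : ℕ) (hab : a ≠ b) (h1n : 1 < nn) : vperm a b nn nn = a := by
  have h1 : (Equiv.swap 1 ((Equiv.swap nn a) b)) nn = nn := by
    apply Equiv.swap_apply_of_ne_of_ne
    · omega
    · intro h
      apply hab
      have := congrArg (Equiv.swap nn a) h
      simpa using this
  simp only [vperm, Equiv.Perm.mul_apply, h1, Equiv.swap_apply_left]

lemma swap_mem_range {x p q nn : ℕ} (hx1 : 1 ≤ x) (hxn : x ≤ nn) (hp1 : 1 ≤ p) (hpn : p ≤ nn)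
    (hq1 : 1 ≤ q) (hqn : q ≤ nn) : 1 ≤ Equiv.swap p q x ∧ Equiv.swap p q x ≤ nn := by
  rw [Equiv.swap_apply_def]
  split_ifs <;> omega

lemma vperm_mem_range {a b nn x : ℕ} (ha1 : 1 ≤ a) (han : a ≤ nn) (hb1 : 1 ≤ b) (hbn : b ≤ nn)
    (h1n : 1 ≤ nn) (hx1 : 1 ≤ x) (hxn : x ≤ nn) : 1 ≤ vperm a b nn x ∧ vperm a b nn x ≤ nn := by
  have h1 := swap_mem_range (p := nn) (q := a) hb1 hbn h1n le_rfl ha1 han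
  have h2 := swap_mem_range (p := 1) (q := (Equiv.swap nn a) b) hx1 hxn le_rfl h1n h1.1 h1.2
  exact swap_mem_range h2.1 h2.2 h1n le_rfl ha1 han

/-- sign factor -/
def sgn (jv : ℕ) (s1 s2 : Bool) : ℤ :=
  if jv = 1 then (if s1 then -1 else 1) else if jv = 2 then (if s2 then -1 else 1) else 1

lemma sgn_units (jv : ℕ) (s1 s2 : Bool) : sgn jv s1 s2 = 1 ∨ sgn jv s1 s2 = -1 := by
  unfold sgn; split_ifs <;> simp

lemma natAbs_sgn_mul (jv : ℕ) (s1 s2 : Bool) (m : ℕ) :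
    (sgn jv s1 s2 * (m : ℤ)).natAbs = m := by
  rcases sgn_units jv s1 s2 with h | h <;> rw [h] <;> simp

/-- the underlying function of a family member -/
def famFun (n : ℕ) (i i' : ℤ) (t : ℕ) (s1 s2 : Bool) : Fin n → ℤ :=
  fun j => if j.val = 0 then -i' else if j.val = n - 1 then i
    else sgn j.val s1 s2 * ((vperm i.natAbs i'.natAbs n) ((Equiv.swap 2 (2 + t)) (j.val + 1)) : ℤ)

end Fam

section Fam2
variable {n : ℕ} {i i' : ℤ}

lemma mid_idx {t jv : ℕ} (ht : t < n - 2) (h1 : 1 ≤ jv) (h2 : jv ≤ n - 2) :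
    2 ≤ (Equiv.swap 2 (2 + t)) (jv + 1) ∧ (Equiv.swap 2 (2 + t)) (jv + 1) ≤ n - 1 := by
  rw [Equiv.swap_apply_def]
  split_ifs <;> omega

/-- a member of the family is a signed permutation -/
def famP (hn4 : 4 ≤ n) (hi0 : i ≠ 0) (hi'0 : i' ≠ 0) (hile : i.natAbs ≤ n)
    (hi'le : i'.natAbs ≤ n) (habne : i.natAbs ≠ i'.natAbs)
    (t : ℕ) (ht : t < n - 2) (s1 s2 : Bool) : SignedPerm n := by
  refine ⟨famFun n i i' t s1 s2, ?_, ?_⟩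
  · -- entries nonzero and small
    intro j
    have hA : 1 ≤ i.natAbs := Int.natAbs_pos.mpr hi0
    have hB : 1 ≤ i'.natAbs := Int.natAbs_pos.mpr hi'0
    unfold famFun
    split_ifs with h0 h1
    · constructor
      · simpa using hi'0
      · simpa using hi'le
    · exact ⟨hi0, hile⟩
    · have hj1 : 1 ≤ j.val := by omega
      have hj2 : j.val ≤ n - 2 := by have := j.isLt; omega
      have hmid := mid_idx (n := n) ht hj1 hj2
      have hx1 : 1 ≤ (Equiv.swap 2 (2 + t)) (j.val + 1) := by omega
      have hxn : (Equiv.swap 2 (2 + t)) (j.val + 1) ≤ n := by omega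
      have hv := vperm_mem_range (a := i.natAbs) (b := i'.natAbs) (nn := n)
        hA hile hB hi'le (by omega) hx1 hxn
      constructor
      · intro hc
        have hca := congrArg Int.natAbs hc
        rw [natAbs_sgn_mul] at hca
        simp at hca
        omega
      · rw [natAbs_sgn_mul]
        omega
  · -- injectivity of natAbs
    intro j1 j2 heq
    simp only at heq
    have key : ∀ j : Fin n, ((famFun n i i' t s1 s2) j).natAbs =
        if j.val = 0 then i'.natAbs else if j.val = n - 1 then i.natAbs
        else (vperm i.natAbs i'.natAbs n) ((Equiv.swap 2 (2 + t)) (j.val + 1)) := by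
      intro j
      unfold famFun
      split_ifs with h0 h1
      · simp
      · rfl
      · rw [natAbs_sgn_mul]
    rw [key, key] at heq
    have hA : 1 ≤ i.natAbs := Int.natAbs_pos.mpr hi0
    have hB : 1 ≤ i'.natAbs := Int.natAbs_pos.mpr hi'0
    have hinj := (vperm i.natAbs i'.natAbs n).injective
    have hv1 : (vperm i.natAbs i'.natAbs n) 1 = i'.natAbs := vperm_one _ _ _
    have hvn : (vperm i.natAbs i'.natAbs n) n = i.natAbs :=
      vperm_last _ _ _ habne (by omega)
    have hj1lt := j1.isLt
    have hj2lt := j2.isLt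
    apply Fin.ext
    by_cases h10 : j1.val = 0 <;> by_cases h20 : j2.val = 0
    · omega
    · rw [if_pos h10, if_neg h20] at heq
      by_cases h2n : j2.val = n - 1
      · rw [if_pos h2n] at heq; omega
      · rw [if_neg h2n] at heq
        have hmid := mid_idx (n := n) ht (by omega) (by omega : j2.val ≤ n - 2)
        have := hinj (heq.symm.trans hv1.symm)
        omega
    · rw [if_pos h20, if_neg h10] at heq
      by_cases h1n : j1.val = n - 1
      · rw [if_pos h1n] at heq; omega
      · rw [if_neg h1n] at heq
        have hmid := mid_idx (n := n) ht (by omega) (by omega : j1.val ≤ n - 2)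
        have := hinj (heq.trans hv1.symm)
        omega
    · rw [if_neg h10, if_neg h20] at heq
      by_cases h1n : j1.val = n - 1 <;> by_cases h2n : j2.val = n - 1
      · omega
      · rw [if_pos h1n, if_neg h2n] at heq
        have hmid := mid_idx (n := n) ht (by omega) (by omega : j2.val ≤ n - 2)
        have := hinj (heq.symm.trans hvn.symm)
        omega
      · rw [if_neg h1n, if_pos h2n] at heq
        have hmid := mid_idx (n := n) ht (by omega) (by omega : j1.val ≤ n - 2)
        have := hinj (heq.trans hvn.symm)
        omega
      · rw [if_neg h1n, if_neg h2n] at heq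
        have := hinj heq
        have := Equiv.injective (Equiv.swap 2 (2+t)) this
        omega

end Fam2

section Fam3
variable {n : ℕ} {i i' : ℤ}

lemma famP_val (hn4 : 4 ≤ n) (hi0 : i ≠ 0) (hi'0 : i' ≠ 0) (hile : i.natAbs ≤ n)
    (hi'le : i'.natAbs ≤ n) (habne : i.natAbs ≠ i'.natAbs)
    (t : ℕ) (ht : t < n - 2) (s1 s2 : Bool) :
    (famP hn4 hi0 hi'0 hile hi'le habne t ht s1 s2).1 = famFun n i i' t s1 s2 := rfl

lemma famP_first (hn4 : 4 ≤ n) (hi0 : i ≠ 0) (hi'0 : i' ≠ 0) (hile : i.natAbs ≤ n)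
    (hi'le : i'.natAbs ≤ n) (habne : i.natAbs ≠ i'.natAbs)
    (t : ℕ) (ht : t < n - 2) (s1 s2 : Bool) :
    (famP hn4 hi0 hi'0 hile hi'le habne t ht s1 s2).1 ⟨0, by omega⟩ = -i' := by
  rw [famP_val]
  unfold famFun
  simp

lemma famP_lastEntry (hn4 : 4 ≤ n) (hi0 : i ≠ 0) (hi'0 : i' ≠ 0) (hile : i.natAbs ≤ n)
    (hi'le : i'.natAbs ≤ n) (habne : i.natAbs ≠ i'.natAbs)
    (t : ℕ) (ht : t < n - 2) (s1 s2 : Bool) :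
    lastEntry (famP hn4 hi0 hi'0 hile hi'le habne t ht s1 s2) = i := by
  rw [lastEntry_eq (by omega : 0 < n), famP_val]
  unfold famFun
  rw [if_neg (by simp; omega), if_pos rfl]

lemma famP_fullRev_lastEntry (hn4 : 4 ≤ n) (hi0 : i ≠ 0) (hi'0 : i' ≠ 0) (hile : i.natAbs ≤ n)
    (hi'le : i'.natAbs ≤ n) (habne : i.natAbs ≠ i'.natAbs)
    (t : ℕ) (ht : t < n - 2) (s1 s2 : Bool) :
    lastEntry (fullRev (by omega : 0 < n) (famP hn4 hi0 hi'0 hile hi'le habne t ht s1 s2)) = i' := by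
  rw [lastEntry_fullRev, famP_first hn4 hi0 hi'0 hile hi'le habne t ht s1 s2]
  ring

lemma famP_one (hn4 : 4 ≤ n) (hi0 : i ≠ 0) (hi'0 : i' ≠ 0) (hile : i.natAbs ≤ n)
    (hi'le : i'.natAbs ≤ n) (habne : i.natAbs ≠ i'.natAbs)
    (t : ℕ) (ht : t < n - 2) (s1 s2 : Bool) :
    (famP hn4 hi0 hi'0 hile hi'le habne t ht s1 s2).1 ⟨1, by omega⟩ =
      (if s1 then (-1 : ℤ) else 1) * ((vperm i.natAbs i'.natAbs n) (2 + t) : ℤ) := by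
  rw [famP_val]
  unfold famFun
  rw [if_neg (by simp), if_neg (by simp; omega)]
  show sgn 1 s1 s2 * _ = _
  rw [show (1 : ℕ) + 1 = 2 from rfl, Equiv.swap_apply_left]
  unfold sgn
  simp

lemma famP_two (hn4 : 4 ≤ n) (hi0 : i ≠ 0) (hi'0 : i' ≠ 0) (hile : i.natAbs ≤ n)
    (hi'le : i'.natAbs ≤ n) (habne : i.natAbs ≠ i'.natAbs)
    (t : ℕ) (ht : t < n - 2) (s1 s2 : Bool) :
    (famP hn4 hi0 hi'0 hile hi'le habne t ht s1 s2).1 ⟨2, by omega⟩ =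
      (if s2 then (-1 : ℤ) else 1) *
        ((vperm i.natAbs i'.natAbs n) ((Equiv.swap 2 (2 + t)) 3) : ℤ) := by
  rw [famP_val]
  unfold famFun
  rw [if_neg (by simp), if_neg (by simp; omega)]
  show sgn 2 s1 s2 * _ = _
  unfold sgn
  simp

lemma bool_sign_inj {m : ℤ} (hm : 0 < m) {s s' : Bool}
    (h : (if s then (-1 : ℤ) else 1) * m = (if s' then (-1 : ℤ) else 1) * m) : s = s' := by
  cases s <;> cases s' <;> first | rfl | (exfalso; simp at h; omega)

lemma famP_inj (hn4 : 4 ≤ n) (hi0 : i ≠ 0) (hi'0 : i' ≠ 0) (hile : i.natAbs ≤ n)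
    (hi'le : i'.natAbs ≤ n) (habne : i.natAbs ≠ i'.natAbs)
    (t t' : ℕ) (ht : t < n - 2) (ht' : t' < n - 2) (s1 s2 s1' s2' : Bool)
    (heq : famP hn4 hi0 hi'0 hile hi'le habne t ht s1 s2 =
      famP hn4 hi0 hi'0 hile hi'le habne t' ht' s1' s2') :
    t = t' ∧ s1 = s1' ∧ s2 = s2' := by
  have hA : 1 ≤ i.natAbs := Int.natAbs_pos.mpr hi0
  have hB : 1 ≤ i'.natAbs := Int.natAbs_pos.mpr hi'0
  have hinj := (vperm i.natAbs i'.natAbs n).injective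
  have e1 := congrArg (fun w : SignedPerm n => w.1 ⟨1, by omega⟩) heq
  simp only [famP_one hn4 hi0 hi'0 hile hi'le habne] at e1
  have hm1 : 1 ≤ (vperm i.natAbs i'.natAbs n) (2 + t) :=
    (vperm_mem_range hA hile hB hi'le (by omega) (by omega) (by omega)).1
  have habs : ∀ (s : Bool) (m : ℕ), ((if s then (-1 : ℤ) else 1) * (m : ℤ)).natAbs = m := by
    intro s m; split_ifs <;> simp
  have htt : t = t' := by
    have h2 := congrArg Int.natAbs e1
    rw [habs, habs] at h2
    have := hinj h2
    omega
  subst htt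
  have hs1 : s1 = s1' := bool_sign_inj (by exact_mod_cast hm1) e1
  have e2 := congrArg (fun w : SignedPerm n => w.1 ⟨2, by omega⟩) heq
  simp only [famP_two hn4 hi0 hi'0 hile hi'le habne] at e2
  have hmid : 2 ≤ (Equiv.swap 2 (2 + t)) 3 ∧ (Equiv.swap 2 (2 + t)) 3 ≤ n - 1 := by
    rw [Equiv.swap_apply_def]
    split_ifs <;> omega
  have hx1 : 1 ≤ (Equiv.swap 2 (2 + t)) 3 := by omega
  have hxn : (Equiv.swap 2 (2 + t)) 3 ≤ n := by omega
  have hm2 : 1 ≤ (vperm i.natAbs i'.natAbs n) ((Equiv.swap 2 (2 + t)) 3) :=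
    (vperm_mem_range hA hile hB hi'le (by omega) hx1 hxn).1
  have hs2 : s2 = s2' := bool_sign_inj (by exact_mod_cast hm2) e2
  exact ⟨rfl, hs1, hs2⟩

end Fam3

section Choose
variable {n : ℕ}

lemma choose_crossing (hn4 : 4 ≤ n) (i i' : ℤ) (hi0 : i ≠ 0) (hi'0 : i' ≠ 0)
    (hile : i.natAbs ≤ n) (hi'le : i'.natAbs ≤ n) (habne : i.natAbs ≠ i'.natAbs)
    (B : Finset (SignedPerm n)) (Fe : Finset (Sym2 (SignedPerm n)))
    (hsz : B.card + Fe.card < 4 * (n - 2)) :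
    ∃ u : SignedPerm n, lastEntry u = i ∧
      lastEntry (fullRev (by omega : 0 < n) u) = i' ∧
      u ∉ B ∧ fullRev (by omega : 0 < n) u ∉ B ∧
      s(u, fullRev (by omega : 0 < n) u) ∉ Fe := by
  classical
  have hn0 : 0 < n := by omega
  set F : Fin (n - 2) × Bool × Bool → SignedPerm n :=
    fun c => famP hn4 hi0 hi'0 hile hi'le habne c.1.val c.1.isLt c.2.1 c.2.2 with hF
  have hFlast : ∀ c, lastEntry (F c) = i := fun c =>
    famP_lastEntry hn4 hi0 hi'0 hile hi'le habne _ _ _ _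
  have hFrlast : ∀ c, lastEntry (fullRev hn0 (F c)) = i' := fun c =>
    famP_fullRev_lastEntry hn4 hi0 hi'0 hile hi'le habne _ _ _ _
  have hii' : i ≠ i' := fun h => habne (by rw [h])
  have hFinj : Function.Injective F := by
    intro c1 c2 h
    obtain ⟨h1, h2, h3⟩ := famP_inj hn4 hi0 hi'0 hile hi'le habne _ _ _ _ _ _ _ _ h
    exact Prod.ext (Fin.ext h1) (Prod.ext h2 h3)
  have hrFinj : Function.Injective (fun c => fullRev hn0 (F c)) :=
    (fullRev_involutive hn0).injective.comp hFinj
  set Bad : Finset (Fin (n - 2) × Bool × Bool) :=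
    Finset.univ.filter (fun c => F c ∈ B ∨ fullRev hn0 (F c) ∈ B ∨
      s(F c, fullRev hn0 (F c)) ∈ Fe) with hBad
  have hcard : Bad.card ≤ B.card + Fe.card := by
    rw [← Finset.card_disjSum B Fe]
    apply Finset.card_le_card_of_injOn
      (fun c => if F c ∈ B then Sum.inl (F c) else if fullRev hn0 (F c) ∈ B
        then Sum.inl (fullRev hn0 (F c)) else Sum.inr s(F c, fullRev hn0 (F c)))
    · intro c hc
      rw [hBad, Finset.mem_coe, Finset.mem_filter] at hc
      dsimp only
      split_ifs with h1 h2
      · simp [h1]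
      · simp [h2]
      · rcases hc.2 with h | h | h
        · exact absurd h h1
        · exact absurd h h2
        · simp [h]
    · intro c1 hc1 c2 hc2 h
      simp only at h
      split_ifs at h with h1 h2 h3 h4 h5
      all_goals simp only [Sum.inl.injEq, Sum.inr.injEq] at h
      · exact hFinj h
      · exfalso
        apply hii'
        rw [← hFlast c1, h, hFrlast c2]
      · exfalso
        apply hii'
        rw [← hFlast c2, ← h, hFrlast c1]
      · exact hrFinj h
      · rw [Sym2.eq_iff] at h
        rcases h with ⟨ha, _⟩ | ⟨ha, _⟩
        · exact hFinj ha
        · exfalso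
          apply hii'
          rw [← hFlast c1, ha, hFrlast c2]
  have hlt : Bad.card < Fintype.card (Fin (n - 2) × Bool × Bool) := by
    have : Fintype.card (Fin (n - 2) × Bool × Bool) = (n - 2) * (2 * 2) := by simp
    omega
  obtain ⟨c, hc⟩ : ∃ c, c ∉ Bad := by
    by_contra hall
    push_neg at hall
    have : Finset.univ ⊆ Bad := fun c _ => hall c
    have := Finset.card_le_card this
    rw [Finset.card_univ] at this
    omega
  rw [hBad, Finset.mem_filter] at hc
  push_neg at hc
  have hc' := hc (Finset.mem_univ c)
  exact ⟨F c, hFlast c, hFrlast c, hc'.1, hc'.2.1, hc'.2.2⟩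

end Choose

section Listing

/-- good successor relation: next is neither equal nor opposite -/
def GoodRel (s t : ℤ) : Prop := t ≠ s ∧ t ≠ -s

instance : DecidableRel GoodRel := fun s t => by unfold GoodRel; infer_instance

set_option maxHeartbeats 1000000 in
lemma five_order (a b x y z : ℤ) (hnd : ([a, b, x, y, z] : List ℤ).Nodup) :
    ∃ L : List ℤ, L.Nodup ∧ (∀ w, w ∈ L ↔ w = a ∨ w = b ∨ w = x ∨ w = y ∨ w = z) ∧
      L.head? = some a ∧ L.getLast? = some b ∧ L.Chain' GoodRel := by
  simp only [List.nodup_cons, List.mem_cons, List.not_mem_nil, or_false, List.mem_singleton,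
    List.nodup_nil, and_true, not_or] at hnd
  have key : (x ≠ -a ∧ y ≠ -x ∧ z ≠ -y ∧ b ≠ -z) ∨
      (x ≠ -a ∧ z ≠ -x ∧ y ≠ -z ∧ b ≠ -y) ∨
      (y ≠ -a ∧ x ≠ -y ∧ z ≠ -x ∧ b ≠ -z) ∨
      (y ≠ -a ∧ z ≠ -y ∧ x ≠ -z ∧ b ≠ -x) ∨
      (z ≠ -a ∧ x ≠ -z ∧ y ≠ -x ∧ b ≠ -y) ∨
      (z ≠ -a ∧ y ≠ -z ∧ x ≠ -y ∧ b ≠ -x) := by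
    by_cases hxy : y = -x
    · by_cases hxa : x = -a
      · right; right; right; left; omega
      · by_cases hyb : y = -b
        · right; right; right; left; omega
        · right; left; omega
    · by_cases hxz : z = -x
      · by_cases hxa : x = -a
        · right; right; right; right; right; omega
        · by_cases hzb : z = -b
          · right; right; right; right; right; omega
          · left; omega
      · by_cases hyz : z = -y
        · by_cases hya : y = -a
          · right; right; right; right; left; omega
          · by_cases hzb : z = -b
            · right; right; right; right; left; omega
            · right; right; left; omega
        · by_cases hzb : z = -b
          · by_cases hxa : x = -a
            · right; right; right; right; left; omega
            · right; left; omega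
          · by_cases hxa : x = -a
            · right; right; left; omega
            · left; omega
  rcases key with h | h | h | h | h | h
  · refine ⟨[a, x, y, z, b], ?_, fun w => ?_, rfl, ?_, ?_⟩
    · simp
      omega
    · simp
      tauto
    · simp
    · simp [List.Chain', List.isChain_cons_cons, GoodRel]
      omega
  · refine ⟨[a, x, z, y, b], ?_, fun w => ?_, rfl, ?_, ?_⟩
    · simp
      omega
    · simp
      tauto
    · simp
    · simp [List.Chain', List.isChain_cons_cons, GoodRel]
      omega
  · refine ⟨[a, y, x, z, b], ?_, fun w => ?_, rfl, ?_, ?_⟩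
    · simp
      omega
    · simp
      tauto
    · simp
    · simp [List.Chain', List.isChain_cons_cons, GoodRel]
      omega
  · refine ⟨[a, y, z, x, b], ?_, fun w => ?_, rfl, ?_, ?_⟩
    · simp
      omega
    · simp
      tauto
    · simp
    · simp [List.Chain', List.isChain_cons_cons, GoodRel]
      omega
  · refine ⟨[a, z, x, y, b], ?_, fun w => ?_, rfl, ?_, ?_⟩
    · simp
      omega
    · simp
      tauto
    · simp
    · simp [List.Chain', List.isChain_cons_cons, GoodRel]
      omega
  · refine ⟨[a, z, y, x, b], ?_, fun w => ?_, rfl, ?_, ?_⟩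
    · simp
      omega
    · simp
      tauto
    · simp
    · simp [List.Chain', List.isChain_cons_cons, GoodRel]
      omega

lemma exists_listing : ∀ (m : ℕ), 5 ≤ m → ∀ (S : Finset ℤ), S.card = m →
    ∀ a b, a ∈ S → b ∈ S → a ≠ b →
    ∃ L : List ℤ, L.Nodup ∧ (∀ x, x ∈ L ↔ x ∈ S) ∧ L.head? = some a ∧
      L.getLast? = some b ∧ L.Chain' GoodRel := by
  intro m
  induction m using Nat.strong_induction_on with
  | _ m ih =>
    intro hm5 S hcard a b ha hb hab
    have hC : ((S.erase a).erase b).card = m - 2 := by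
      rw [Finset.card_erase_of_mem (Finset.mem_erase.mpr ⟨hab.symm, hb⟩),
        Finset.card_erase_of_mem ha, hcard]
      omega
    have hmemC : ∀ w, w ∈ (S.erase a).erase b ↔ w ≠ b ∧ w ≠ a ∧ w ∈ S := by
      intro w
      simp [Finset.mem_erase, and_assoc]
    by_cases hm : m = 5
    · -- base case
      subst hm
      obtain ⟨x, y, z, hxy, hxz, hyz, hCxyz⟩ := Finset.card_eq_three.mp (show ((S.erase a).erase b).card = 3 by omega)
      have hx : x ∈ (S.erase a).erase b := by rw [hCxyz]; simp
      have hy : y ∈ (S.erase a).erase b := by rw [hCxyz]; simp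
      have hz : z ∈ (S.erase a).erase b := by rw [hCxyz]; simp
      rw [hmemC] at hx hy hz
      obtain ⟨hxb, hxa, hxS⟩ := hx
      obtain ⟨hyb, hya, hyS⟩ := hy
      obtain ⟨hzb, hza, hzS⟩ := hz
      have hnd : ([a, b, x, y, z] : List ℤ).Nodup := by
        simp
        omega
      obtain ⟨L, hLnd, hLmem, hLh, hLl, hLc⟩ := five_order a b x y z hnd
      refine ⟨L, hLnd, fun w => ?_, hLh, hLl, hLc⟩
      rw [hLmem]
      constructor
      · rintro (rfl | rfl | rfl | rfl | rfl)
        · exact ha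
        · exact hb
        · exact hxS
        · exact hyS
        · exact hzS
      · intro hw
        by_cases h1 : w = a
        · exact Or.inl h1
        by_cases h2 : w = b
        · exact Or.inr (Or.inl h2)
        have : w ∈ (S.erase a).erase b := (hmemC w).mpr ⟨h2, h1, hw⟩
        rw [hCxyz] at this
        simp at this
        tauto
    · -- inductive step
      have hm6 : 6 ≤ m := by omega
      have hCne : ((S.erase a).erase b).erase (-a) ≠ ∅ := by
        apply Finset.nonempty_iff_ne_empty.mp
        rw [← Finset.card_pos]
        by_cases hmem : -a ∈ (S.erase a).erase b
        · rw [Finset.card_erase_of_mem hmem]; omega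
        · rw [Finset.erase_eq_of_notMem hmem]; omega
      obtain ⟨x, hxmem⟩ := Finset.nonempty_iff_ne_empty.mpr hCne
      have hxa' : x ≠ -a := (Finset.mem_erase.mp hxmem).1
      have hxC := (Finset.mem_erase.mp hxmem).2
      rw [hmemC] at hxC
      obtain ⟨hxb, hxa, hxS⟩ := hxC
      have hbS' : b ∈ S.erase a := Finset.mem_erase.mpr ⟨hab.symm, hb⟩
      have hxS' : x ∈ S.erase a := Finset.mem_erase.mpr ⟨hxa, hxS⟩
      obtain ⟨L', hnd', hmem', hh', hl', hc'⟩ :=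
        ih (m - 1) (by omega) (by omega) (S.erase a)
          (by rw [Finset.card_erase_of_mem ha, hcard]) x b hxS' hbS' hxb
      refine ⟨a :: L', ?_, ?_, rfl, ?_, ?_⟩
      · rw [List.nodup_cons]
        refine ⟨fun hmem => ?_, hnd'⟩
        rw [hmem'] at hmem
        exact (Finset.mem_erase.mp hmem).1 rfl
      · intro w
        rw [List.mem_cons, hmem', Finset.mem_erase]
        constructor
        · rintro (rfl | ⟨_, hw⟩)
          · exact ha
          · exact hw
        · intro hw
          by_cases h : w = a
          · exact Or.inl h
          · exact Or.inr ⟨h, hw⟩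
      · cases L' with
        | nil => simp at hh'
        | cons hd tl => rw [List.getLast?_cons_cons]; exact hl'
      · rw [List.Chain', List.isChain_cons]
        refine ⟨fun y hy => ?_, hc'⟩
        cases L' with
        | nil => simp at hh'
        | cons hd tl =>
          simp at hh' hy
          subst hh' hy
          exact ⟨hxa, hxa'⟩

end Listing

section WalkCount
open SimpleGraph

lemma induce_walk_count_mem {V : Type*} [DecidableEq V] (G : SimpleGraph V) (s t : Set V)
    (hst : s ≤ t) {x y : ↥s} (p : (G.induce s).Walk x y) (hp : p.IsHamiltonian) (z : ↥t)
    (h : z.1 ∈ s) :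
    (p.map (G.induceHomOfLE hst).toHom).support.count z = 1 := by
  rw [SimpleGraph.Walk.support_map]
  have hinj : Function.Injective ⇑((G.induceHomOfLE hst).toHom) :=
    fun a b hab => Subtype.ext (show a.1 = b.1 from congrArg (Subtype.val : ↥t → V) hab)
  have hz : z = (G.induceHomOfLE hst).toHom ⟨z.1, h⟩ := Subtype.ext rfl
  rw [hz]
  exact (List.count_map_of_injective _ _ hinj _).trans (by convert hp ⟨z.1, h⟩)

lemma induce_walk_count_not_mem {V : Type*} [DecidableEq V] (G : SimpleGraph V) (s t : Set V)
    (hst : s ≤ t) {x y : ↥s} (p : (G.induce s).Walk x y) (z : ↥t)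
    (h : z.1 ∉ s) :
    (p.map (G.induceHomOfLE hst).toHom).support.count z = 0 := by
  rw [SimpleGraph.Walk.support_map, List.count_eq_zero]
  intro hmem
  rw [List.mem_map] at hmem
  obtain ⟨w, _, hw⟩ := hmem
  apply h
  rw [← hw]
  exact w.2

end WalkCount

section MVF
variable {V : Type*} [DecidableEq V]

/-- the two endpoints of a `Sym2` as a finset -/
def sym2ToFinset (e : Sym2 V) : Finset V :=
  Sym2.lift ⟨fun a b => ({a, b} : Finset V), fun a b => Finset.pair_comm a b⟩ e

lemma mem_sym2ToFinset (e : Sym2 V) (v : V) : v ∈ sym2ToFinset e ↔ v ∈ e := by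
  induction e using Sym2.ind with
  | _ a b =>
    unfold sym2ToFinset
    rw [Sym2.lift_mk, Sym2.mem_iff]
    simp

lemma card_sym2ToFinset (e : Sym2 V) : (sym2ToFinset e).card ≤ 2 := by
  induction e using Sym2.ind with
  | _ a b =>
    unfold sym2ToFinset
    rw [Sym2.lift_mk]
    exact le_trans (Finset.card_insert_le a {b}) (by simp)

/-- endpoints of a matching, as a finset -/
def mvF (M : Finset (Sym2 V)) : Finset V := M.biUnion sym2ToFinset

lemma mem_mvF (M : Finset (Sym2 V)) (v : V) : v ∈ mvF M ↔ v ∈ matchingVerts M := by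
  unfold mvF matchingVerts
  rw [Finset.mem_biUnion]
  simp only [Set.mem_setOf_eq, mem_sym2ToFinset]

lemma card_mvF (M : Finset (Sym2 V)) : (mvF M).card ≤ 2 * M.card := by
  refine le_trans Finset.card_biUnion_le ?_
  calc ∑ e ∈ M, (sym2ToFinset e).card ≤ ∑ _e ∈ M, 2 :=
        Finset.sum_le_sum (fun e _ => card_sym2ToFinset e)
    _ = 2 * M.card := by rw [Finset.sum_const, smul_eq_mul, mul_comm]

end MVF

/-- Hamiltonian path across at least 5 sections, between vertices of two
distinct sections. -/
theorem hamiltonianPath_across_sections (n : ℕ) (hn : 4 ≤ n) (I : Finset ℤ)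
    (hI : ∀ i ∈ I, i ≠ 0 ∧ i.natAbs ≤ n) (hIcard : 5 ≤ I.card)
    (j1 j2 : ℤ) (hj1 : j1 ∈ I) (hj2 : j2 ∈ I) (hjj : j1 ≠ j2)
    (M Fe : Finset (Sym2 (SignedPerm n)))
    (hM : IsMatchingEdgeSet (burntPancakeGraph n) M)
    (hFe : ∀ e ∈ Fe, e ∈ (burntPancakeGraph n).edgeSet)
    (hdisj : ∀ e ∈ Fe, ∀ v : SignedPerm n, v ∈ e → v ∉ matchingVerts M)
    (hcard : M.card + Fe.card ≤ n - 2)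
    (hHC : ∀ i ∈ I, HamiltonianConnected
      (SimpleGraph.induce {v : SignedPerm n | lastEntry v = i ∧ v ∉ matchingVerts M}
        ((burntPancakeGraph n).deleteEdges (Fe : Set (Sym2 (SignedPerm n))))))
    (u v : SignedPerm n) (hu : lastEntry u = j1) (hv : lastEntry v = j2)
    (huM : u ∉ matchingVerts M) (hvM : v ∉ matchingVerts M) :
    ∃ p : (SimpleGraph.induce {w : SignedPerm n | lastEntry w ∈ I ∧ w ∉ matchingVerts M}
        ((burntPancakeGraph n).deleteEdges (Fe : Set (Sym2 (SignedPerm n))))).Walk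
        ⟨u, ⟨by rw [hu]; exact hj1, huM⟩⟩ ⟨v, ⟨by rw [hv]; exact hj2, hvM⟩⟩,
      p.IsHamiltonian := by
  classical
  have hn0 : 0 < n := by omega
  have hvT : v ∈ {w : SignedPerm n | lastEntry w ∈ I ∧ w ∉ matchingVerts M} :=
    ⟨by rw [hv]; exact hj2, hvM⟩
  have hsubsec : ∀ i ∈ I, {w : SignedPerm n | lastEntry w = i ∧ w ∉ matchingVerts M} ≤
      {w : SignedPerm n | lastEntry w ∈ I ∧ w ∉ matchingVerts M} := by
    intro i hi w hw
    exact ⟨by rw [Set.mem_setOf_eq] at hw; rw [hw.1]; exact hi, hw.2⟩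
  have main : ∀ (L : List ℤ) (i : ℤ) (a : SignedPerm n)
      (_hnd : (i :: L).Nodup) (_hsub : ∀ x ∈ i :: L, x ∈ I)
      (_hch : (i :: L).Chain' GoodRel)
      (_ha : lastEntry a = i) (_haM : a ∉ matchingVerts M) (_hav : a ≠ v)
      (_hlast : (i :: L).getLast? = some j2)
      (haT : a ∈ {w : SignedPerm n | lastEntry w ∈ I ∧ w ∉ matchingVerts M}),
      ∃ q : (SimpleGraph.induce {w : SignedPerm n | lastEntry w ∈ I ∧ w ∉ matchingVerts M}
          ((burntPancakeGraph n).deleteEdges (Fe : Set (Sym2 (SignedPerm n))))).Walk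
          ⟨a, haT⟩ ⟨v, hvT⟩,
        ∀ x, q.support.count x = if lastEntry x.1 ∈ (i :: L) then 1 else 0 := by
    intro L
    induction L with
    | nil =>
      intro i a hnd hsub hch ha haM hav hlast haT
      have hij2 : i = j2 := by simpa using hlast
      have hiI : i ∈ I := hsub i (by simp)
      have hvSi : v ∈ {w : SignedPerm n | lastEntry w = i ∧ w ∉ matchingVerts M} :=
        ⟨hv.trans hij2.symm, hvM⟩
      have haSi : a ∈ {w : SignedPerm n | lastEntry w = i ∧ w ∉ matchingVerts M} := ⟨ha, haM⟩
      have hne : (⟨a, haSi⟩ : {w : SignedPerm n // w ∈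
          {w : SignedPerm n | lastEntry w = i ∧ w ∉ matchingVerts M}}) ≠ ⟨v, hvSi⟩ :=
        fun h => hav (congrArg Subtype.val h)
      obtain ⟨p, hp⟩ := hHC i hiI _ _ hne
      refine ⟨p.map (((burntPancakeGraph n).deleteEdges
        (Fe : Set (Sym2 (SignedPerm n)))).induceHomOfLE (hsubsec i hiI)).toHom,
        fun x => ?_⟩
      by_cases hx : lastEntry x.1 = i
      · rw [if_pos (by simpa using hx)]
        exact induce_walk_count_mem _ _ _ _ p hp x ⟨hx, x.2.2⟩
      · rw [if_neg (by simpa using hx)]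
        exact induce_walk_count_not_mem _ _ _ _ p x (fun hc => hx hc.1)
    | cons i' rest IH =>
      intro i a hnd hsub hch ha haM hav hlast haT
      have hiI : i ∈ I := hsub i (by simp)
      have hi'I : i' ∈ I := hsub i' (by simp)
      obtain ⟨hgr, hch'⟩ := List.isChain_cons_cons.mp hch
      have hii' : i' ≠ i := hgr.1
      obtain ⟨hi0, hile⟩ := hI i hiI
      obtain ⟨hi'0, hi'le⟩ := hI i' hi'I
      have habne : i.natAbs ≠ i'.natAbs := by
        intro h
        rw [Int.natAbs_eq_natAbs_iff] at h
        rcases hgr with ⟨h1, h2⟩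
        omega
      have hB : (insert a (insert v (mvF M))).card + Fe.card < 4 * (n - 2) := by
        have h1 := Finset.card_insert_le a (insert v (mvF M))
        have h2 := Finset.card_insert_le v (mvF M)
        have h3 := card_mvF M
        omega
      obtain ⟨w, hwl, hwrl0, hwB, hrwB, hwFe⟩ :=
        choose_crossing hn i i' hi0 hi'0 hile hi'le habne (insert a (insert v (mvF M))) Fe hB
      have hwrl : lastEntry (fullRev hn0 w) = i' := hwrl0
      have hrwB' : fullRev hn0 w ∉ insert a (insert v (mvF M)) := hrwB
      have hwFe' : s(w, fullRev hn0 w) ∉ Fe := hwFe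
      have hwmv : w ∉ matchingVerts M := fun hc =>
        hwB (Finset.mem_insert_of_mem (Finset.mem_insert_of_mem ((mem_mvF M w).mpr hc)))
      have hfwmv : fullRev hn0 w ∉ matchingVerts M := fun hc =>
        hrwB' (Finset.mem_insert_of_mem (Finset.mem_insert_of_mem ((mem_mvF M _).mpr hc)))
      have hwa : w ≠ a := fun hc => hwB (by rw [hc]; exact Finset.mem_insert_self a _)
      have hfwv : fullRev hn0 w ≠ v := fun hc =>
        hrwB' (by rw [hc]; exact Finset.mem_insert_of_mem (Finset.mem_insert_self v _))
      have hne : (⟨a, ⟨ha, haM⟩⟩ : {x : SignedPerm n // x ∈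
          {w : SignedPerm n | lastEntry w = i ∧ w ∉ matchingVerts M}}) ≠ ⟨w, ⟨hwl, hwmv⟩⟩ :=
        fun h => hwa (congrArg Subtype.val h).symm
      obtain ⟨p1, hp1⟩ := hHC i hiI _ _ hne
      have hwfw : w ≠ fullRev hn0 w := by
        intro h
        apply hii'
        rw [← hwrl, ← h, hwl]
      have hadj : ((burntPancakeGraph n).deleteEdges
          (Fe : Set (Sym2 (SignedPerm n)))).Adj w (fullRev hn0 w) := by
        rw [SimpleGraph.deleteEdges_adj]
        exact ⟨adj_fullRev hn0 w hwfw, by simpa using hwFe'⟩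
      have hwT : w ∈ {w : SignedPerm n | lastEntry w ∈ I ∧ w ∉ matchingVerts M} :=
        ⟨by rw [hwl]; exact hiI, hwmv⟩
      have hfwT : fullRev hn0 w ∈ {w : SignedPerm n | lastEntry w ∈ I ∧ w ∉ matchingVerts M} :=
        ⟨by rw [hwrl]; exact hi'I, hfwmv⟩
      have hadjH : (SimpleGraph.induce {w : SignedPerm n | lastEntry w ∈ I ∧ w ∉ matchingVerts M}
          ((burntPancakeGraph n).deleteEdges (Fe : Set (Sym2 (SignedPerm n))))).Adj
          ⟨w, hwT⟩ ⟨fullRev hn0 w, hfwT⟩ := hadj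
      obtain ⟨q', hq'⟩ := IH i' (fullRev hn0 w) hnd.of_cons
        (fun x hx => hsub x (List.mem_cons_of_mem _ hx)) hch' hwrl hfwmv hfwv
        (by rw [← List.getLast?_cons_cons (a := i)]; exact hlast) hfwT
      refine ⟨((p1.map (((burntPancakeGraph n).deleteEdges
          (Fe : Set (Sym2 (SignedPerm n)))).induceHomOfLE (hsubsec i hiI)).toHom).append
          (SimpleGraph.Walk.cons ((show (((burntPancakeGraph n).deleteEdges
            (Fe : Set (Sym2 (SignedPerm n)))).induceHomOfLE (hsubsec i hiI)).toHom
            ⟨w, ⟨hwl, hwmv⟩⟩ = ⟨w, hwT⟩ from rfl) ▸ hadjH) q')).copy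
            (show (((burntPancakeGraph n).deleteEdges
            (Fe : Set (Sym2 (SignedPerm n)))).induceHomOfLE (hsubsec i hiI)).toHom
            ⟨a, ⟨ha, haM⟩⟩ = ⟨a, haT⟩ from rfl) rfl, fun x => ?_⟩
      simp only [SimpleGraph.Walk.support_copy, SimpleGraph.Walk.support_append, List.count_append, SimpleGraph.Walk.support_cons,
        List.tail_cons]
      rw [hq' x]
      by_cases hx1 : lastEntry x.1 = i
      · have hx2 : lastEntry x.1 ∉ (i' :: rest) := by
          intro hc
          exact (List.nodup_cons.mp hnd).1 (hx1 ▸ hc)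
        rw [induce_walk_count_mem _ _ _ _ p1 hp1 x ⟨hx1, x.2.2⟩, if_neg hx2,
          if_pos (by simp [hx1])]
      · rw [induce_walk_count_not_mem _ _ _ _ p1 x (fun hc => hx1 hc.1)]
        by_cases hx2 : lastEntry x.1 ∈ (i' :: rest)
        · rw [if_pos hx2, if_pos (List.mem_cons_of_mem _ hx2)]
        · have hx3 : lastEntry x.1 ∉ (i :: i' :: rest) := by
            simp only [List.mem_cons] at hx2 ⊢
            push_neg at hx2 ⊢
            exact ⟨hx1, hx2⟩
          rw [if_neg hx2, if_neg hx3]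
  obtain ⟨L, hLnd, hLmem, hLh, hLl, hLc⟩ :=
    exists_listing I.card hIcard I rfl j1 j2 hj1 hj2 hjj
  cases L with
  | nil => simp at hLh
  | cons i0 L' =>
    have hi0 : i0 = j1 := by simpa using hLh
    have huv : u ≠ v := fun h => hjj (by rw [← hu, ← hv, h])
    obtain ⟨q, hq⟩ := main L' i0 u hLnd (fun x hx => (hLmem x).mp hx) hLc
      (hu.trans hi0.symm) huM huv hLl ⟨by rw [hu]; exact hj1, huM⟩
    refine ⟨q, fun x => ?_⟩
    rw [show (1:ℕ) = if lastEntry x.1 ∈ i0 :: L' then 1 else 0 from (if_pos ((hLmem _).mpr x.2.1)).symm]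
    convert hq x
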